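/- (Lemma: alternate expression for the multiplicative cost, Lemma 1 of the paper.) Let Γ be a controlled transfer operator, R an operator valued cost, F a Hermitian matrix, and M ≥ 1. For every feedback controller K and every positive semidefinite initial matrix ω̂: ∑ over (y_1,…,y_M) ∈ Y^M of G_0(ω̂) (with controls u_k = K_k(y_1,…,y_k)) equals ∑ over (y_1,…,y_M) ∈ Y^M of (∏_{k=0}^{M−1} p_R(y_{k+1}|u_k, ω̂_k)) · tr(F ω̂_M), where ω̂_0 = ω̂ and ω̂_{k+1} = Λ_{Γ,R}(u_k, y_{k+1}) ω̂_k. That is, J^μ_{ω̂,0}(K) = E^K_{ω̂,0}[⟨ω̂_M, F⟩], the expectation of the terminal pairing along the unnormalized conditional dynamics. -/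

import Mathlib

/-! The map `ωh ↦ Λ_{Γ,R}(u,y) ωh` is positively homogeneous, and so are the product of the
`p_R` (of degree `0`) and the terminal state (of degree `1`) along the conditional dynamics.
Hence rescaling the unnormalized state `Γ(u,y) R(u) ωh` by `p_R(y|u,ωh)⁻¹` moves the factor
`p_R(y|u,ωh)` out of the terminal pairing, and induction on the record identifies `G_0` with
the `p_R`-weighted pairing outcome by outcome. When `p_R(y|u,ωh) = 0`, positive semidefiniteness
forces `Γ(u,y) R(u) ωh = 0`, and both sides vanish. -/

open Matrix BigOperators
open scoped ComplexOrder

noncomputable section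

/-- Complex `n × n` matrices. -/
abbrev Mat (n : ℕ) := Matrix (Fin n) (Fin n) ℂ

/-- Real part of the trace. -/
def trR {n : ℕ} (A : Mat n) : ℝ := A.trace.re

/-- `p_R(y|u,ωh) = tr(Γ(u,y)(R(u)ωh)) / tr(R(u)ωh)` (equal to `0` when the
denominator vanishes, by the junk-value convention of real division). -/
def pR {n : ℕ} {U Y : Type*} (Γ : U → Y → Mat n →ₗ[ℂ] Mat n)
    (R : U → Mat n → Mat n) (u : U) (y : Y) (ωh : Mat n) : ℝ :=
  trR (Γ u y (R u ωh)) / trR (R u ωh)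

/-- The unnormalized conditional state
`Λ_{Γ,R}(u,y)ωh = Γ_R(u,y)ωh / p_R(y|u,ωh)` (equal to `0` when `p_R(y|u,ωh) = 0`). -/
def lamR {n : ℕ} {U Y : Type*} (Γ : U → Y → Mat n →ₗ[ℂ] Mat n)
    (R : U → Mat n → Mat n) (u : U) (y : Y) (ωh : Mat n) : Mat n :=
  (pR Γ R u y ωh)⁻¹ • Γ u y (R u ωh)

/-- The cost functional `G`: `G(ωh) = tr(F ωh)` when no outcomes remain, and otherwise
`G_j(ωh) = G_{j+1}(Γ(u_j,y_{j+1}) R(u_j) ωh)`, with controls `u_j = K(record so far)`. -/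
def Gcost {n : ℕ} {U Y : Type*} (Γ : U → Y → Mat n →ₗ[ℂ] Mat n)
    (R : U → Mat n → Mat n) (F : Mat n) (K : List Y → U) :
    List Y → Mat n → List Y → ℝ
  | _, ωh, [] => trR (F * ωh)
  | rec, ωh, y :: ys =>
      Gcost Γ R F K (rec ++ [y]) (Γ (K rec) y (R (K rec) ωh)) ys

/-- `∏_k p_R(y_{k+1}|u_k, ωh_k)` along the record `ys`, with the unnormalized
conditional dynamics `ωh_{k+1} = Λ_{Γ,R}(u_k,y_{k+1}) ωh_k`. -/
def prodPR {n : ℕ} {U Y : Type*} (Γ : U → Y → Mat n →ₗ[ℂ] Mat n)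
    (R : U → Mat n → Mat n) (K : List Y → U) : Mat n → List Y → List Y → ℝ
  | _, _, [] => 1
  | ωh, rec, y :: ys =>
      pR Γ R (K rec) y ωh * prodPR Γ R K (lamR Γ R (K rec) y ωh) (rec ++ [y]) ys

/-- The terminal state of the unnormalized conditional dynamics
`ωh_{k+1} = Λ_{Γ,R}(u_k,y_{k+1}) ωh_k` along the record `ys`. -/
def trajR {n : ℕ} {U Y : Type*} (Γ : U → Y → Mat n →ₗ[ℂ] Mat n)
    (R : U → Mat n → Mat n) (K : List Y → U) : Mat n → List Y → List Y → Mat n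
  | ωh, _, [] => ωh
  | ωh, rec, y :: ys => trajR Γ R K (lamR Γ R (K rec) y ωh) (rec ++ [y]) ys

lemma Matrix.PosSemidef.trR_nonneg {n : ℕ} {A : Mat n} (hA : A.PosSemidef) : 0 ≤ trR A :=
  (Complex.nonneg_iff.mp hA.trace_nonneg).1

lemma Matrix.PosSemidef.eq_zero_of_trR_eq_zero {n : ℕ} {A : Mat n} (hA : A.PosSemidef)
    (h : trR A = 0) : A = 0 := by
  refine hA.trace_eq_zero_iff.mp (Complex.ext h ?_)
  exact ((Complex.nonneg_iff.mp hA.trace_nonneg).2).symm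

@[simp]
lemma trR_zero {n : ℕ} : trR (0 : Mat n) = 0 := by
  simp [trR]

lemma trR_smul {n : ℕ} (c : ℝ) (A : Mat n) : trR (c • A) = c * trR A := by
  simp [trR, Matrix.trace_smul]

section Homogeneity

variable {n : ℕ} {U Y : Type*} (Γ : U → Y → Mat n →ₗ[ℂ] Mat n) (R : U → Mat n → Mat n)
  (K : List Y → U)

lemma pR_smul (hRhom : ∀ (u : U) (r : ℝ) (ωh : Mat n), R u (r • ωh) = r • R u ωh)
    (u : U) (y : Y) {c : ℝ} (hc : 0 < c) (ωh : Mat n) :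
    pR Γ R u y (c • ωh) = pR Γ R u y ωh := by
  rw [pR, pR, hRhom, (Γ u y).map_smul_of_tower, trR_smul, trR_smul,
    mul_div_mul_left _ _ hc.ne']

lemma lamR_smul (hRhom : ∀ (u : U) (r : ℝ) (ωh : Mat n), R u (r • ωh) = r • R u ωh)
    (u : U) (y : Y) {c : ℝ} (hc : 0 < c) (ωh : Mat n) :
    lamR Γ R u y (c • ωh) = c • lamR Γ R u y ωh := by
  rw [lamR, lamR, pR_smul Γ R hRhom u y hc, hRhom, (Γ u y).map_smul_of_tower, smul_comm]

lemma lamR_zero (hRhom : ∀ (u : U) (r : ℝ) (ωh : Mat n), R u (r • ωh) = r • R u ωh)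
    (u : U) (y : Y) : lamR Γ R u y 0 = 0 := by
  have hR0 : R u 0 = 0 := by simpa using hRhom u 0 0
  simp [lamR, hR0]

lemma prodPR_smul (hRhom : ∀ (u : U) (r : ℝ) (ωh : Mat n), R u (r • ωh) = r • R u ωh)
    {c : ℝ} (hc : 0 < c) (ωh : Mat n) (rec ys : List Y) :
    prodPR Γ R K (c • ωh) rec ys = prodPR Γ R K ωh rec ys := by
  induction ys generalizing ωh rec with
  | nil => rfl
  | cons y ys ih => simp only [prodPR, pR_smul Γ R hRhom _ y hc, lamR_smul Γ R hRhom _ y hc, ih]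

lemma trajR_smul (hRhom : ∀ (u : U) (r : ℝ) (ωh : Mat n), R u (r • ωh) = r • R u ωh)
    {c : ℝ} (hc : 0 < c) (ωh : Mat n) (rec ys : List Y) :
    trajR Γ R K (c • ωh) rec ys = c • trajR Γ R K ωh rec ys := by
  induction ys generalizing ωh rec with
  | nil => rfl
  | cons y ys ih => simp only [trajR, lamR_smul Γ R hRhom _ y hc, ih]

lemma trajR_zero (hRhom : ∀ (u : U) (r : ℝ) (ωh : Mat n), R u (r • ωh) = r • R u ωh)
    (rec ys : List Y) : trajR Γ R K 0 rec ys = 0 := by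
  induction ys generalizing rec with
  | nil => rfl
  | cons y ys ih => simp only [trajR, lamR_zero Γ R hRhom, ih]

end Homogeneity

section Positivity

variable {n : ℕ} {U Y : Type*} {Γ : U → Y → Mat n →ₗ[ℂ] Mat n} {R : U → Mat n → Mat n}

lemma pR_nonneg (hPSD : ∀ (u : U) (y : Y) (ω : Mat n), ω.PosSemidef → (Γ u y ω).PosSemidef)
    (hRPSD : ∀ (u : U) (ωh : Mat n), ωh.PosSemidef → (R u ωh).PosSemidef)
    (u : U) (y : Y) {ωh : Mat n} (hωh : ωh.PosSemidef) : 0 ≤ pR Γ R u y ωh :=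
  div_nonneg (hPSD u y _ (hRPSD u ωh hωh)).trR_nonneg (hRPSD u ωh hωh).trR_nonneg

lemma map_eq_zero_of_pR_eq_zero
    (hPSD : ∀ (u : U) (y : Y) (ω : Mat n), ω.PosSemidef → (Γ u y ω).PosSemidef)
    (hRPSD : ∀ (u : U) (ωh : Mat n), ωh.PosSemidef → (R u ωh).PosSemidef)
    {u : U} {y : Y} {ωh : Mat n} (hωh : ωh.PosSemidef) (hp : pR Γ R u y ωh = 0) :
    Γ u y (R u ωh) = 0 := by
  rcases div_eq_zero_iff.mp hp with hΓ | hR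
  · exact (hPSD u y _ (hRPSD u ωh hωh)).eq_zero_of_trR_eq_zero hΓ
  · rw [(hRPSD u ωh hωh).eq_zero_of_trR_eq_zero hR, map_zero]

end Positivity

theorem Gcost_eq_prodPR_mul_trR_trajR {n : ℕ} {U Y : Type*} (Γ : U → Y → Mat n →ₗ[ℂ] Mat n)
    (hPSD : ∀ (u : U) (y : Y) (ω : Mat n), ω.PosSemidef → (Γ u y ω).PosSemidef)
    (R : U → Mat n → Mat n)
    (hRPSD : ∀ (u : U) (ωh : Mat n), ωh.PosSemidef → (R u ωh).PosSemidef)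
    (hRhom : ∀ (u : U) (r : ℝ) (ωh : Mat n), R u (r • ωh) = r • R u ωh)
    (F : Mat n) (K : List Y → U) (rec ys : List Y) {ωh : Mat n} (hωh : ωh.PosSemidef) :
    Gcost Γ R F K rec ωh ys = prodPR Γ R K ωh rec ys * trR (F * trajR Γ R K ωh rec ys) := by
  induction ys generalizing ωh rec with
  | nil => simp [Gcost, prodPR, trajR]
  | cons y ys ih =>
    set p := pR Γ R (K rec) y ωh
    have hlam : lamR Γ R (K rec) y ωh = p⁻¹ • Γ (K rec) y (R (K rec) ωh) := rfl
    rw [Gcost, prodPR, trajR, ih _ (hPSD _ y _ (hRPSD _ ωh hωh))]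
    rcases (pR_nonneg hPSD hRPSD (K rec) y hωh).eq_or_lt with hp | hp
    · rw [map_eq_zero_of_pR_eq_zero hPSD hRPSD hωh hp.symm, ← hp, trajR_zero Γ R K hRhom]
      simp
    · rw [hlam, prodPR_smul Γ R K hRhom (inv_pos.mpr hp), trajR_smul Γ R K hRhom (inv_pos.mpr hp),
        Matrix.mul_smul, trR_smul]
      field_simp

theorem multiplicative_cost_alternate_expression_general
    {n : ℕ} {U Y : Type*} [Fintype Y]
    (Γ : U → Y → Mat n →ₗ[ℂ] Mat n)
    (hPSD : ∀ (u : U) (y : Y) (ω : Mat n), ω.PosSemidef → (Γ u y ω).PosSemidef)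
    (R : U → Mat n → Mat n)
    (hRPSD : ∀ (u : U) (ωh : Mat n), ωh.PosSemidef → (R u ωh).PosSemidef)
    (hRhom : ∀ (u : U) (r : ℝ) (ωh : Mat n), R u (r • ωh) = r • R u ωh)
    (F : Mat n)
    (M : ℕ)
    (K : List Y → U) (ωh : Mat n) (hωh : ωh.PosSemidef) :
    ∑ ys : Fin M → Y, Gcost Γ R F K [] ωh (List.ofFn ys)
      = ∑ ys : Fin M → Y,
          prodPR Γ R K ωh [] (List.ofFn ys) * trR (F * trajR Γ R K ωh [] (List.ofFn ys)) :=
  Finset.sum_congr rfl fun ys _ =>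
    Gcost_eq_prodPR_mul_trR_trajR Γ hPSD R hRPSD hRhom F K [] (List.ofFn ys) hωh

/-- Lemma 1 of the paper: the multiplicative cost
`J^μ_{ωh,0}(K) = ∑ G_0` equals the expectation `E[⟨ωh_M, F⟩]` of the terminal pairing
along the unnormalized conditional dynamics. -/
theorem multiplicative_cost_alternate_expression
    {n : ℕ} {U Y : Type*} [Fintype U] [Nonempty U] [Fintype Y] [Nonempty Y]
    (Γ : U → Y → Mat n →ₗ[ℂ] Mat n)
    (hPSD : ∀ (u : U) (y : Y) (ω : Mat n), ω.PosSemidef → (Γ u y ω).PosSemidef)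
    (hNorm : ∀ (u : U) (ω : Mat n), ∑ y : Y, (Γ u y ω).trace = ω.trace)
    (R : U → Mat n → Mat n)
    (hRPSD : ∀ (u : U) (ωh : Mat n), ωh.PosSemidef → (R u ωh).PosSemidef)
    (hRhom : ∀ (u : U) (r : ℝ) (ωh : Mat n), R u (r • ωh) = r • R u ωh)
    (F : Mat n) (hF : F.IsHermitian)
    (M : ℕ) (hM : 1 ≤ M)
    (K : List Y → U) (ωh : Mat n) (hωh : ωh.PosSemidef) :
    ∑ ys : Fin M → Y, Gcost Γ R F K [] ωh (List.ofFn ys)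
      = ∑ ys : Fin M → Y,
          prodPR Γ R K ωh [] (List.ofFn ys) * trR (F * trajR Γ R K ωh [] (List.ofFn ys)) :=
  multiplicative_cost_alternate_expression_general Γ hPSD R hRPSD hRhom F M K ωh hωh
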